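/- arXiv:math/0005049 — 2 statements merged into one kernel-verified Lean document; each statement's English description precedes it below -/
import Mathlib

section
/- Work over a field K with units t and p₁, p₂ such that t² ∉ {p₁², p₂², (p₁p₂)²}. For a unit p with t² ≠ p², define D(p) = t p^{−1} − t^{−1} p and the 4×4 matrix Ř(p) over K, rows and columns indexed by pairs in {1,2}², with nonzero entries (row (i,k), column (j,l)): Ř(p)_{(1,1),(1,1)} = 1; Ř(p)_{(2,2),(2,2)} = (tp − t^{−1}p^{−1})/D(p); Ř(p)_{(1,2),(1,2)} = (t − t^{−1})p^{−1}/D(p); Ř(p)_{(2,1),(2,1)} = (t − t^{−1})p/D(p); Ř(p)_{(1,2),(2,1)} = Ř(p)_{(2,1),(1,2)} = −(p − p^{−1})/D(p). Then, with I the 2×2 identity and ⊗ the Kronecker product: (Ř(p₁) ⊗ I) · (I ⊗ Ř(p₁p₂)) · (Ř(p₂) ⊗ I) = (I ⊗ Ř(p₂)) · (Ř(p₁p₂) ⊗ I) · (I ⊗ Ř(p₁)). -/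
open Matrix
open scoped Kronecker

/-- `M ↦ M ⊗ I`, acting on triple tensor indices (reassociated). -/
def amp12 {A : Type*} [CommRing A] {n : ℕ}
    (M : Matrix (Fin n × Fin n) (Fin n × Fin n) A) :
    Matrix (Fin n × Fin n × Fin n) (Fin n × Fin n × Fin n) A :=
  Matrix.reindex (Equiv.prodAssoc (Fin n) (Fin n) (Fin n))
    (Equiv.prodAssoc (Fin n) (Fin n) (Fin n)) (M ⊗ₖ (1 : Matrix (Fin n) (Fin n) A))

/-- `M ↦ I ⊗ M`, acting on triple tensor indices. -/
def amp23 {A : Type*} [CommRing A] {n : ℕ}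
    (M : Matrix (Fin n × Fin n) (Fin n × Fin n) A) :
    Matrix (Fin n × Fin n × Fin n) (Fin n × Fin n × Fin n) A :=
  (1 : Matrix (Fin n) (Fin n) A) ⊗ₖ M

/-- The grading-stripped trigonometric R matrix `Ř¹(u)` of `U_q[gl(1|1)]`,
with `t = q^α` and `p = q^u`; indices `1,2` are encoded as `0,1 : Fin 2`. -/
def R1 {K : Type*} [Field K] (t p : K) : Matrix (Fin 2 × Fin 2) (Fin 2 × Fin 2) K :=
  let D : K := t * p⁻¹ - t⁻¹ * p
  Matrix.of fun x y =>
    if x = (0, 0) ∧ y = (0, 0) then 1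
    else if x = (1, 1) ∧ y = (1, 1) then (t * p - t⁻¹ * p⁻¹) / D
    else if x = (0, 1) ∧ y = (0, 1) then (t - t⁻¹) * p⁻¹ / D
    else if x = (1, 0) ∧ y = (1, 0) then (t - t⁻¹) * p / D
    else if x = (0, 1) ∧ y = (1, 0) then -(p - p⁻¹) / D
    else if x = (1, 0) ∧ y = (0, 1) then -(p - p⁻¹) / D
    else 0

/-!
Clearing the common denominator `D(p) = (t² - p²) / (t p)` writes `Ř(p)` as `(t² - p²)⁻¹` times the
matrix `R1Poly t p`, whose entries are polynomials in `t` and `p`. Both sides of the Yang–Baxter equation are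
trilinear in `(Ř(p₁), Ř(p₁p₂), Ř(p₂))` and carry the same three scalars, so it suffices to prove it
for `R1Poly`, where it is an identity of polynomials over any commutative ring, checked entrywise.
-/

section Amplification

variable {A : Type*} [CommRing A] {n : ℕ}

lemma amp12_apply (M : Matrix (Fin n × Fin n) (Fin n × Fin n) A) (i j k a b c : Fin n) :
    amp12 M (i, j, k) (a, b, c) = if k = c then M (i, j) (a, b) else 0 := by
  simp [amp12, one_apply]

lemma amp23_apply (M : Matrix (Fin n × Fin n) (Fin n × Fin n) A) (i j k a b c : Fin n) :
    amp23 M (i, j, k) (a, b, c) = if i = a then M (j, k) (b, c) else 0 := by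
  simp [amp23, one_apply]

lemma amp12_smul (r : A) (M : Matrix (Fin n × Fin n) (Fin n × Fin n) A) :
    amp12 (r • M) = r • amp12 M := by
  simp only [amp12, smul_kronecker, reindex_apply]
  rfl

lemma amp23_smul (r : A) (M : Matrix (Fin n × Fin n) (Fin n × Fin n) A) :
    amp23 (r • M) = r • amp23 M := by
  simp only [amp23, kronecker_smul]

/-- `R`, `S`, `T` play the roles of `Ř(u)`, `Ř(u + v)`, `Ř(v)`. -/
def SatisfiesYBE (R S T : Matrix (Fin n × Fin n) (Fin n × Fin n) A) : Prop :=
  amp12 R * amp23 S * amp12 T = amp23 T * amp12 S * amp23 R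

lemma SatisfiesYBE.smul {R S T : Matrix (Fin n × Fin n) (Fin n × Fin n) A}
    (h : SatisfiesYBE R S T) (a b c : A) : SatisfiesYBE (a • R) (b • S) (c • T) := by
  unfold SatisfiesYBE at h ⊢
  simp only [amp12_smul, amp23_smul, smul_mul_assoc, mul_smul_comm, smul_smul, h]
  congr 1
  ring

end Amplification

def R1Poly {K : Type*} [CommRing K] (t p : K) : Matrix (Fin 2 × Fin 2) (Fin 2 × Fin 2) K
  | (0, 0), (0, 0) => t ^ 2 - p ^ 2
  | (1, 1), (1, 1) => t ^ 2 * p ^ 2 - 1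
  | (0, 1), (0, 1) => t ^ 2 - 1
  | (1, 0), (1, 0) => (t ^ 2 - 1) * p ^ 2
  | (0, 1), (1, 0) => -t * (p ^ 2 - 1)
  | (1, 0), (0, 1) => -t * (p ^ 2 - 1)
  | _, _ => 0

lemma R1_eq_smul_R1Poly {K : Type*} [Field K] {t p : K} (ht : t ≠ 0) (hp : p ≠ 0)
    (h : t ^ 2 ≠ p ^ 2) : R1 t p = (t ^ 2 - p ^ 2)⁻¹ • R1Poly t p := by
  have h' : t ^ 2 - p ^ 2 ≠ 0 := sub_ne_zero.mpr h
  have hD : t * p⁻¹ - t⁻¹ * p = (t ^ 2 - p ^ 2) / (t * p) := by field_simp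
  ext ⟨i, k⟩ ⟨j, l⟩
  fin_cases i <;> fin_cases k <;> fin_cases j <;> fin_cases l <;>
    simp [R1, R1Poly, hD] <;> field_simp <;> ring

set_option maxHeartbeats 4000000 in
lemma R1Poly_satisfiesYBE {K : Type*} [CommRing K] (t p₁ p₂ : K) :
    SatisfiesYBE (R1Poly t p₁) (R1Poly t (p₁ * p₂)) (R1Poly t p₂) := by
  ext ⟨i, j, k⟩ ⟨a, b, c⟩
  simp only [mul_apply, Fintype.sum_prod_type, Fin.sum_univ_two, amp12_apply, amp23_apply]
  fin_cases i <;> fin_cases j <;> fin_cases k <;> fin_cases a <;> fin_cases b <;> fin_cases c <;>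
    simp [R1Poly] <;> ring

/-- The trigonometric Yang–Baxter equation for `Ř¹`, in multiplicative spectral
parameters `p₁ = q^u`, `p₂ = q^v`, `p₁p₂ = q^(u+v)`. -/
theorem R1_trigonometric_YBE {K : Type*} [Field K] (t p₁ p₂ : K)
    (ht : t ≠ 0) (hp₁ : p₁ ≠ 0) (hp₂ : p₂ ≠ 0)
    (h1 : t ^ 2 ≠ p₁ ^ 2) (h2 : t ^ 2 ≠ p₂ ^ 2) (h3 : t ^ 2 ≠ (p₁ * p₂) ^ 2) :
    amp12 (R1 t p₁) * amp23 (R1 t (p₁ * p₂)) * amp12 (R1 t p₂) =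
      amp23 (R1 t p₂) * amp12 (R1 t (p₁ * p₂)) * amp23 (R1 t p₁) := by
  rw [R1_eq_smul_R1Poly ht hp₁ h1, R1_eq_smul_R1Poly ht hp₂ h2,
    R1_eq_smul_R1Poly ht (mul_ne_zero hp₁ hp₂) h3]
  exact (R1Poly_satisfiesYBE t p₁ p₂).smul _ _ _
end

section
/- Work over a commutative ring A with units q, t, w, r satisfying w² = q and (q − q^{−1})² r² = (t − t^{−1})(tq − t^{−1}q^{−1}). Define the 16×16 matrix Ř over A, rows and columns indexed by pairs (i,k) ∈ {1,2,3,4}², entry in row (i,k) and column (j,l) written e^{ik}_{jl}, whose only nonzero entries are: e^{11}_{11} = 1; e^{22}_{22} = e^{33}_{33} = −t²; e^{44}_{44} = t⁴q²; e^{21}_{21} = e^{31}_{31} = 1 − t²; e^{43}_{43} = e^{42}_{42} = t⁴q² − t²; e^{41}_{41} = (t² − 1)(t²q² − 1); e^{32}_{32} = t²q² − t²; e^{12}_{21} = e^{13}_{31} = e^{21}_{12} = e^{31}_{13} = t; e^{43}_{34} = e^{42}_{24} = e^{34}_{43} = e^{24}_{42} = t³q; e^{14}_{41} = e^{41}_{14}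 = t²; e^{23}_{32} = e^{32}_{23} = −t²q; e^{41}_{32} = e^{32}_{41} = (q − q^{−1})t²qrw; e^{41}_{23} = e^{23}_{41} = −(q − q^{−1})t²qrw^{−1}. Then (Ř − 1) · (Ř + t² · 1) · (Ř − t⁴q² · 1) = 0, where 1 denotes the 16×16 identity matrix. -/
open Matrix

/-- The grading-stripped quantum R matrix `Ř²` of `U_q[gl(2|1)]`, with `t = q^α`,
`w = q^(1/2)`, `r = [α]^(1/2)[α+1]^(1/2)`; `qi` and `wi` stand for the inverses of
`q` and `w`; indices `1,2,3,4` are encoded as `0,1,2,3 : Fin 4`. -/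
def RQ2 {A : Type*} [CommRing A] (q qi t w wi r : A) :
    Matrix (Fin 4 × Fin 4) (Fin 4 × Fin 4) A :=
  Matrix.of fun x y =>
    if x = (0, 0) ∧ y = (0, 0) then 1
    else if x = (1, 1) ∧ y = (1, 1) then -t ^ 2
    else if x = (2, 2) ∧ y = (2, 2) then -t ^ 2
    else if x = (3, 3) ∧ y = (3, 3) then t ^ 4 * q ^ 2
    else if x = (1, 0) ∧ y = (1, 0) then 1 - t ^ 2
    else if x = (2, 0) ∧ y = (2, 0) then 1 - t ^ 2
    else if x = (3, 2) ∧ y = (3, 2) then t ^ 4 * q ^ 2 - t ^ 2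
    else if x = (3, 1) ∧ y = (3, 1) then t ^ 4 * q ^ 2 - t ^ 2
    else if x = (3, 0) ∧ y = (3, 0) then (t ^ 2 - 1) * (t ^ 2 * q ^ 2 - 1)
    else if x = (2, 1) ∧ y = (2, 1) then t ^ 2 * q ^ 2 - t ^ 2
    else if x = (0, 1) ∧ y = (1, 0) then t
    else if x = (0, 2) ∧ y = (2, 0) then t
    else if x = (1, 0) ∧ y = (0, 1) then t
    else if x = (2, 0) ∧ y = (0, 2) then t
    else if x = (3, 2) ∧ y = (2, 3) then t ^ 3 * q
    else if x = (3, 1) ∧ y = (1, 3) then t ^ 3 * q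
    else if x = (2, 3) ∧ y = (3, 2) then t ^ 3 * q
    else if x = (1, 3) ∧ y = (3, 1) then t ^ 3 * q
    else if x = (0, 3) ∧ y = (3, 0) then t ^ 2
    else if x = (3, 0) ∧ y = (0, 3) then t ^ 2
    else if x = (1, 2) ∧ y = (2, 1) then -(t ^ 2 * q)
    else if x = (2, 1) ∧ y = (1, 2) then -(t ^ 2 * q)
    else if x = (3, 0) ∧ y = (2, 1) then (q - qi) * t ^ 2 * q * r * w
    else if x = (2, 1) ∧ y = (3, 0) then (q - qi) * t ^ 2 * q * r * w
    else if x = (3, 0) ∧ y = (1, 2) then -((q - qi) * t ^ 2 * q * r * wi)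
    else if x = (1, 2) ∧ y = (3, 0) then -((q - qi) * t ^ 2 * q * r * wi)
    else 0

set_option maxHeartbeats 1000000 in
def RQ2mid {A : Type*} [CommRing A] (T W Wi R : A) :
    Matrix (Fin 4 × Fin 4) (Fin 4 × Fin 4) A :=
  Matrix.of fun x y =>
    if x = (0, 3) ∧ y = (0, 3) then T ^ 4 + (-1) * T ^ 2
    else if x = (0, 3) ∧ y = (1, 2) then (-1) * T ^ 4 * W ^ 2 * Wi * ((W ^ 2 - Wi ^ 2) * R)
    else if x = (0, 3) ∧ y = (2, 1) then T ^ 4 * W ^ 3 * ((W ^ 2 - Wi ^ 2) * R)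
    else if x = (0, 3) ∧ y = (3, 0) then T ^ 6 * W ^ 4 + (-1) * T ^ 4 * W ^ 4
    else if x = (1, 2) ∧ y = (0, 3) then (-1) * T ^ 4 * W ^ 2 * Wi * ((W ^ 2 - Wi ^ 2) * R)
    else if x = (1, 2) ∧ y = (1, 2) then T ^ 4 * W ^ 4 * Wi ^ 2 * ((W ^ 2 - Wi ^ 2) * R) ^ 2 + T ^ 4 * W ^ 4 + (-1) * T ^ 2
    else if x = (1, 2) ∧ y = (2, 1) then (-1) * T ^ 4 * W ^ 5 * Wi * ((W ^ 2 - Wi ^ 2) * R) ^ 2 + (-1) * T ^ 4 * W ^ 6 + T ^ 2 * W ^ 2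
    else if x = (1, 2) ∧ y = (3, 0) then (-1) * T ^ 6 * W ^ 6 * Wi * ((W ^ 2 - Wi ^ 2) * R) + T ^ 4 * W ^ 6 * Wi * ((W ^ 2 - Wi ^ 2) * R) + (-1) * T ^ 4 * W ^ 5 * ((W ^ 2 - Wi ^ 2) * R)
    else if x = (1, 3) ∧ y = (1, 3) then T ^ 6 * W ^ 4 + (-1) * T ^ 2
    else if x = (1, 3) ∧ y = (3, 1) then T ^ 7 * W ^ 6 + (-1) * T ^ 3 * W ^ 2
    else if x = (2, 1) ∧ y = (0, 3) then T ^ 4 * W ^ 3 * ((W ^ 2 - Wi ^ 2) * R)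
    else if x = (2, 1) ∧ y = (1, 2) then (-1) * T ^ 4 * W ^ 5 * Wi * ((W ^ 2 - Wi ^ 2) * R) ^ 2 + (-1) * T ^ 4 * W ^ 6 + T ^ 2 * W ^ 2
    else if x = (2, 1) ∧ y = (2, 1) then T ^ 4 * W ^ 6 * ((W ^ 2 - Wi ^ 2) * R) ^ 2 + T ^ 4 * W ^ 8 + (-1) * T ^ 2 * W ^ 4
    else if x = (2, 1) ∧ y = (3, 0) then T ^ 4 * W ^ 4 * Wi * ((W ^ 2 - Wi ^ 2) * R) + T ^ 6 * W ^ 7 * ((W ^ 2 - Wi ^ 2) * R) + (-1) * T ^ 4 * W ^ 3 * ((W ^ 2 - Wi ^ 2) * R)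
    else if x = (2, 3) ∧ y = (2, 3) then T ^ 6 * W ^ 4 + (-1) * T ^ 2
    else if x = (2, 3) ∧ y = (3, 2) then T ^ 7 * W ^ 6 + (-1) * T ^ 3 * W ^ 2
    else if x = (3, 0) ∧ y = (0, 3) then T ^ 6 * W ^ 4 + (-1) * T ^ 4 * W ^ 4
    else if x = (3, 0) ∧ y = (1, 2) then (-1) * T ^ 6 * W ^ 6 * Wi * ((W ^ 2 - Wi ^ 2) * R) + T ^ 4 * W ^ 6 * Wi * ((W ^ 2 - Wi ^ 2) * R) + (-1) * T ^ 4 * W ^ 5 * ((W ^ 2 - Wi ^ 2) * R)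
    else if x = (3, 0) ∧ y = (2, 1) then T ^ 4 * W ^ 4 * Wi * ((W ^ 2 - Wi ^ 2) * R) + T ^ 6 * W ^ 7 * ((W ^ 2 - Wi ^ 2) * R) + (-1) * T ^ 4 * W ^ 3 * ((W ^ 2 - Wi ^ 2) * R)
    else if x = (3, 0) ∧ y = (3, 0) then T ^ 4 * W ^ 4 * Wi ^ 2 * ((W ^ 2 - Wi ^ 2) * R) ^ 2 + T ^ 4 * W ^ 6 * ((W ^ 2 - Wi ^ 2) * R) ^ 2 + T ^ 8 * W ^ 8 + (-2) * T ^ 6 * W ^ 8 + (-1) * T ^ 6 * W ^ 4 + T ^ 4 * W ^ 8 + (2) * T ^ 4 * W ^ 4 + T ^ 4 + (-1) * T ^ 2 * W ^ 4 + (-1) * T ^ 2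
    else if x = (3, 1) ∧ y = (1, 3) then T ^ 7 * W ^ 6 + (-1) * T ^ 3 * W ^ 2
    else if x = (3, 1) ∧ y = (3, 1) then T ^ 8 * W ^ 8 + (-1) * T ^ 4 * W ^ 4
    else if x = (3, 2) ∧ y = (2, 3) then T ^ 7 * W ^ 6 + (-1) * T ^ 3 * W ^ 2
    else if x = (3, 2) ∧ y = (3, 2) then T ^ 8 * W ^ 8 + (-1) * T ^ 4 * W ^ 4
    else if x = (3, 3) ∧ y = (3, 3) then T ^ 8 * W ^ 8 + T ^ 6 * W ^ 4 + (-1) * T ^ 4 * W ^ 4 + (-1) * T ^ 2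
    else 0

set_option maxHeartbeats 4000000 in
private lemma RQ2_mid_eq {A : Type*} [CommRing A] (T W Wi R : A) :
    (RQ2 (W ^ 2) (Wi ^ 2) T W Wi R - 1) *
      (RQ2 (W ^ 2) (Wi ^ 2) T W Wi R +
        T ^ 2 • (1 : Matrix (Fin 4 × Fin 4) (Fin 4 × Fin 4) A)) = RQ2mid T W Wi R := by
  ext ⟨i, k⟩ ⟨j, l⟩
  fin_cases i <;> fin_cases k <;> fin_cases j <;> fin_cases l
  all_goals simp (config := { decide := true }) only [RQ2, RQ2mid, Matrix.mul_apply, Matrix.sub_apply,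
      Matrix.add_apply, Matrix.smul_apply, Matrix.one_apply, Matrix.zero_apply, Matrix.of_apply,
      Fintype.sum_prod_type, Fin.sum_univ_four, smul_eq_mul, Prod.mk.injEq, and_true, true_and,
      and_false, false_and, and_self, if_true, if_false, mul_zero, zero_mul, add_zero,
      zero_add, mul_one, one_mul]
  all_goals try ring

set_option maxHeartbeats 4000000 in
private lemma RQ2_mid_mul {A : Type*} [CommRing A] (T Ti W Wi R : A)
    (htt : T * Ti = 1) (hww : W * Wi = 1)
    (hr2 : (W ^ 2 - Wi ^ 2) ^ 2 * R ^ 2 = (T - Ti) * (T * W ^ 2 - Ti * Wi ^ 2)) :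
    RQ2mid T W Wi R *
      (RQ2 (W ^ 2) (Wi ^ 2) T W Wi R -
        (T ^ 4 * (W ^ 2) ^ 2) • (1 : Matrix (Fin 4 × Fin 4) (Fin 4 × Fin 4) A)) = 0 := by
  ext ⟨i, k⟩ ⟨j, l⟩
  fin_cases i <;> fin_cases k <;> fin_cases j <;> fin_cases l
  all_goals simp (config := { decide := true }) only [RQ2, RQ2mid, Matrix.mul_apply, Matrix.sub_apply,
      Matrix.add_apply, Matrix.smul_apply, Matrix.one_apply, Matrix.zero_apply, Matrix.of_apply,
      Fintype.sum_prod_type, Fin.sum_univ_four, smul_eq_mul, Prod.mk.injEq, and_true, true_and,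
      and_false, false_and, and_self, if_true, if_false, mul_zero, zero_mul, add_zero,
      zero_add, mul_one, one_mul]
  all_goals try ring
  · -- entry ((0, 3), (1, 2))
    linear_combination (T ^ 6 * W ^ 5 * ((W ^ 2 - Wi ^ 2) * R)) * hww
  · -- entry ((0, 3), (2, 1))
    linear_combination (T ^ 6 * W ^ 3 * ((W ^ 2 - Wi ^ 2) * R)) * hww
  · -- entry ((0, 3), (3, 0))
    linear_combination (T ^ 6 * W ^ 4 * Wi ^ 2 + T ^ 6 * W ^ 6) * hr2 + (T ^ 5 * Ti * W ^ 4 * Wi ^ 4 + T ^ 5 * Ti * W ^ 6 * Wi ^ 2 + (-1) * T ^ 6 * W ^ 4 * Wi ^ 4 + T ^ 4 * W ^ 4 * Wi ^ 4 + (-2) * T ^ 6 * W ^ 6 * Wi ^ 2 + T ^ 4 * W ^ 6 * Wi ^ 2 + (-1) * T ^ 6 * W ^ 8) * htt + ((-1) * T ^ 6 * W ^ 3 * Wi ^ 3 + T ^ 4 * W ^ 3 * Wi ^ 3 + (-1) * T ^ 6 * W ^ 2 * Wi ^ 2 + T ^ 4 * W ^ 2 * Wi ^ 2 + T ^ 8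 * W ^ 5 * Wi + (-2) * T ^ 6 * W ^ 5 * Wi + (-1) * T ^ 6 * W * Wi + T ^ 4 * W ^ 5 * Wi + T ^ 4 * W * Wi + T ^ 8 * W ^ 4 + (-2) * T ^ 6 * W ^ 4 + (-1) * T ^ 6 + T ^ 4 * W ^ 4 + T ^ 4) * hww
  · -- entry ((1, 2), (0, 3))
    linear_combination (T ^ 6 * W ^ 5 * ((W ^ 2 - Wi ^ 2) * R)) * hww
  · -- entry ((1, 2), (1, 2))
    linear_combination ((-1) * T ^ 6 * W ^ 8 * Wi ^ 2 + (2) * T ^ 6 * W ^ 7 * Wi) * hr2 + ((-1) * T ^ 5 * Ti * W ^ 8 * Wi ^ 4 + (2) * T ^ 5 * Ti * W ^ 7 * Wi ^ 3 + T ^ 6 * W ^ 8 * Wi ^ 4 + (-1) * T ^ 4 * W ^ 8 * Wi ^ 4 + (-2) * T ^ 6 * W ^ 7 * Wi ^ 3 + (2) * T ^ 4 * W ^ 7 * Wi ^ 3 + T ^ 6 * W ^ 10 * Wi ^ 2 + (-2) * T ^ 6 * W ^ 9 * Wi) * htt + (T ^ 6 * W ^ 7 * Wi ^ 3 + (-1)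 * T ^ 4 * W ^ 7 * Wi ^ 3 + (-1) * T ^ 6 * W ^ 6 * Wi ^ 2 + T ^ 4 * W ^ 6 * Wi ^ 2 + (-1) * T ^ 8 * W ^ 9 * Wi + T ^ 6 * W ^ 9 * Wi + (-1) * T ^ 6 * W ^ 5 * Wi + T ^ 4 * W ^ 5 * Wi + T ^ 8 * W ^ 8 + (-1) * T ^ 6 * W ^ 8 + (-1) * T ^ 6 * W ^ 4 + T ^ 4 * W ^ 4) * hww
  · -- entry ((1, 2), (2, 1))
    linear_combination ((-1) * T ^ 6 * W ^ 6 * Wi ^ 2 + T ^ 6 * W ^ 5 * Wi + (-1) * T ^ 6 * W ^ 8) * hr2 + ((-1) * T ^ 5 * Ti * W ^ 6 * Wi ^ 4 + T ^ 5 * Ti * W ^ 5 * Wi ^ 3 + (-1) * T ^ 5 * Ti * W ^ 8 * Wi ^ 2 + T ^ 6 * W ^ 6 * Wi ^ 4 + (-1) * T ^ 4 * W ^ 6 * Wi ^ 4 + (-1) * T ^ 6 * W ^ 5 * Wi ^ 3 + T ^ 4 * W ^ 5 * Wi ^ 3 + (2) * T ^ 6 * W ^ 8 * Wi ^ 2 +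 (-1) * T ^ 4 * W ^ 8 * Wi ^ 2 + (-1) * T ^ 6 * W ^ 7 * Wi + T ^ 6 * W ^ 10) * htt + (T ^ 6 * W ^ 5 * Wi ^ 3 + (-1) * T ^ 4 * W ^ 5 * Wi ^ 3 + (-1) * T ^ 8 * W ^ 7 * Wi + (2) * T ^ 6 * W ^ 7 * Wi + (-1) * T ^ 4 * W ^ 7 * Wi + T ^ 6 * W ^ 6 + (-1) * T ^ 4 * W ^ 6) * hww
  · -- entry ((1, 2), (3, 0))
    linear_combination ((-1) * T ^ 6 * W ^ 6 * Wi ^ 3 * ((W ^ 2 - Wi ^ 2) * R) + (-1) * T ^ 6 * W ^ 8 * Wi * ((W ^ 2 - Wi ^ 2) * R)) * hr2 + ((-1) * T ^ 5 * Ti * W ^ 6 * Wi ^ 5 * ((W ^ 2 - Wi ^ 2) * R) + (-1) * T ^ 5 * Ti * W ^ 8 * Wi ^ 3 * ((W ^ 2 - Wi ^ 2) * R) + T ^ 6 * W ^ 6 * Wi ^ 5 * ((W ^ 2 - Wi ^ 2) * R) + (-1) * T ^ 4 * W ^ 6 * Wi ^ 5 * ((W ^ 2 - Wi ^ 2) *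 R) + (2) * T ^ 6 * W ^ 8 * Wi ^ 3 * ((W ^ 2 - Wi ^ 2) * R) + (-1) * T ^ 4 * W ^ 8 * Wi ^ 3 * ((W ^ 2 - Wi ^ 2) * R) + T ^ 6 * W ^ 10 * Wi * ((W ^ 2 - Wi ^ 2) * R)) * htt + (T ^ 6 * W ^ 5 * Wi ^ 4 * ((W ^ 2 - Wi ^ 2) * R) + (-1) * T ^ 4 * W ^ 5 * Wi ^ 4 * ((W ^ 2 - Wi ^ 2) * R) + T ^ 6 * W ^ 4 * Wi ^ 3 * ((W ^ 2 - Wi ^ 2) * R) + (-1) * T ^ 4 * W ^ 4 * Wi ^ 3 * ((W ^ 2 - Wi ^ 2) * R) + (-1) * T ^ 8 * W ^ 7 * Wi ^ 2 * ((W ^ 2 - Wi ^ 2) * R) + (2) * T ^ 6 * W ^ 7 * Wi ^ 2 * ((W ^ 2 - Wi ^ 2) * R) + T ^ 6 * W ^ 3 * Wi ^ 2 * ((W ^ 2 - Wi ^ 2) * R) + (-1) * T ^ 4 * W ^ 7 * Wi ^ 2 * ((W ^ 2 - Wi ^ 2) * R) + (-1) * T ^ 4 * W ^ 3 * Wi ^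 2 * ((W ^ 2 - Wi ^ 2) * R) + (-1) * T ^ 8 * W ^ 6 * Wi * ((W ^ 2 - Wi ^ 2) * R) + (2) * T ^ 6 * W ^ 6 * Wi * ((W ^ 2 - Wi ^ 2) * R) + T ^ 6 * W ^ 2 * Wi * ((W ^ 2 - Wi ^ 2) * R) + (-1) * T ^ 4 * W ^ 6 * Wi * ((W ^ 2 - Wi ^ 2) * R) + (-1) * T ^ 4 * W ^ 2 * Wi * ((W ^ 2 - Wi ^ 2) * R) + (-1) * T ^ 6 * W ^ 5 * ((W ^ 2 - Wi ^ 2) * R)) * hww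
  · -- entry ((2, 1), (0, 3))
    linear_combination (T ^ 6 * W ^ 3 * ((W ^ 2 - Wi ^ 2) * R)) * hww
  · -- entry ((2, 1), (1, 2))
    linear_combination ((-1) * T ^ 6 * W ^ 6 * Wi ^ 2 + T ^ 6 * W ^ 5 * Wi + (-1) * T ^ 6 * W ^ 8) * hr2 + ((-1) * T ^ 5 * Ti * W ^ 6 * Wi ^ 4 + T ^ 5 * Ti * W ^ 5 * Wi ^ 3 + (-1) * T ^ 5 * Ti * W ^ 8 * Wi ^ 2 + T ^ 6 * W ^ 6 * Wi ^ 4 + (-1) * T ^ 4 * W ^ 6 * Wi ^ 4 + (-1) * T ^ 6 * W ^ 5 * Wi ^ 3 + T ^ 4 * W ^ 5 * Wi ^ 3 + (2) * T ^ 6 * W ^ 8 * Wi ^ 2 + (-1) * T ^ 4 * W ^ 8 * Wi ^ 2 + (-1) * T ^ 6 * W ^ 7 * Wi + T ^ 6 * W ^ 10) * htt + (T ^ 6 * W ^ 5 * Wi ^ 3 + (-1) * T ^ 4 * W ^ 5 * Wi ^ 3 + (-1) * T ^ 8 * W ^ 7 * Wi + (2) * T ^ 6 * W ^ 7 * Wi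 + (-1) * T ^ 4 * W ^ 7 * Wi + T ^ 6 * W ^ 6 + (-1) * T ^ 4 * W ^ 6) * hww
  · -- entry ((2, 1), (2, 1))
    linear_combination ((2) * T ^ 6 * W ^ 7 * Wi + T ^ 6 * W ^ 10 + (-2) * T ^ 6 * W ^ 6) * hr2 + ((2) * T ^ 5 * Ti * W ^ 7 * Wi ^ 3 + T ^ 5 * Ti * W ^ 10 * Wi ^ 2 + (-2) * T ^ 5 * Ti * W ^ 6 * Wi ^ 2 + (-2) * T ^ 6 * W ^ 7 * Wi ^ 3 + (2) * T ^ 4 * W ^ 7 * Wi ^ 3 + (-1) * T ^ 6 * W ^ 10 * Wi ^ 2 + (2) * T ^ 6 * W ^ 6 * Wi ^ 2 + T ^ 4 * W ^ 10 * Wi ^ 2 + (-2) * T ^ 4 * W ^ 6 * Wi ^ 2 + (-2) * T ^ 6 * W ^ 9 * Wi + (-1) * T ^ 6 * W ^ 12 + (2) * T ^ 6 * W ^ 8) * htt + ((-2) * T ^ 6 * W ^ 6 * Wi ^ 2 + (2) * T ^ 4 * W ^ 6 * Wi ^ 2 + (-1) * T ^ 6 * W ^ 9 * Wi + T ^ 4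 * W ^ 9 * Wi + (2) * T ^ 8 * W ^ 8 + (-3) * T ^ 6 * W ^ 8 + T ^ 4 * W ^ 8) * hww
  · -- entry ((2, 1), (3, 0))
    linear_combination (T ^ 6 * W ^ 7 * Wi ^ 2 * ((W ^ 2 - Wi ^ 2) * R) + T ^ 6 * W ^ 9 * ((W ^ 2 - Wi ^ 2) * R)) * hr2 + (T ^ 5 * Ti * W ^ 7 * Wi ^ 4 * ((W ^ 2 - Wi ^ 2) * R) + T ^ 5 * Ti * W ^ 9 * Wi ^ 2 * ((W ^ 2 - Wi ^ 2) * R) + (-1) * T ^ 6 * W ^ 7 * Wi ^ 4 * ((W ^ 2 - Wi ^ 2) * R) + T ^ 4 * W ^ 7 * Wi ^ 4 * ((W ^ 2 - Wi ^ 2) * R) + (-2) * T ^ 6 * W ^ 9 * Wi ^ 2 * ((W ^ 2 - Wi ^ 2) * R) + T ^ 4 * W ^ 9 * Wi ^ 2 * ((W ^ 2 - Wi ^ 2) * R) + (-1) * T ^ 6 * W ^ 11 * ((W ^ 2 - Wi ^ 2) * R)) * htt + ((-1) * T ^ 6 * W ^ 6 * Wi ^ 3 * ((W ^ 2 - Wi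 ^ 2) * R) + T ^ 4 * W ^ 6 * Wi ^ 3 * ((W ^ 2 - Wi ^ 2) * R) + (-1) * T ^ 6 * W ^ 5 * Wi ^ 2 * ((W ^ 2 - Wi ^ 2) * R) + T ^ 4 * W ^ 5 * Wi ^ 2 * ((W ^ 2 - Wi ^ 2) * R) + T ^ 8 * W ^ 8 * Wi * ((W ^ 2 - Wi ^ 2) * R) + (-2) * T ^ 6 * W ^ 8 * Wi * ((W ^ 2 - Wi ^ 2) * R) + (-1) * T ^ 6 * W ^ 4 * Wi * ((W ^ 2 - Wi ^ 2) * R) + T ^ 4 * W ^ 8 * Wi * ((W ^ 2 - Wi ^ 2) * R) + T ^ 4 * W ^ 4 * Wi * ((W ^ 2 - Wi ^ 2) * R) + T ^ 8 * W ^ 7 * ((W ^ 2 - Wi ^ 2) * R) + (-2) * T ^ 6 * W ^ 7 * ((W ^ 2 - Wi ^ 2) * R) + (-2) * T ^ 6 * W ^ 3 * ((W ^ 2 - Wi ^ 2) * R) + T ^ 4 * W ^ 7 * ((W ^ 2 - Wi ^ 2) * R) + T ^ 4 * W ^ 3 * ((W ^ 2 - Wi ^ 2) * R)) * hww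
  · -- entry ((3, 0), (0, 3))
    linear_combination (T ^ 6 * W ^ 4 * Wi ^ 2 + T ^ 6 * W ^ 6) * hr2 + (T ^ 5 * Ti * W ^ 4 * Wi ^ 4 + T ^ 5 * Ti * W ^ 6 * Wi ^ 2 + (-1) * T ^ 6 * W ^ 4 * Wi ^ 4 + T ^ 4 * W ^ 4 * Wi ^ 4 + (-2) * T ^ 6 * W ^ 6 * Wi ^ 2 + T ^ 4 * W ^ 6 * Wi ^ 2 + (-1) * T ^ 6 * W ^ 8) * htt + ((-1) * T ^ 6 * W ^ 3 * Wi ^ 3 + T ^ 4 * W ^ 3 * Wi ^ 3 + (-1) * T ^ 6 * W ^ 2 * Wi ^ 2 + T ^ 4 * W ^ 2 * Wi ^ 2 + T ^ 8 * W ^ 5 * Wi + (-2) * T ^ 6 * W ^ 5 * Wi + (-1) * T ^ 6 * W * Wi + T ^ 4 * W ^ 5 * Wi + T ^ 4 * W * Wi + T ^ 8 * W ^ 4 + (-2) * T ^ 6 * W ^ 4 + (-1) * T ^ 6 + T ^ 4 * W ^ 4 + T ^ 4) * hww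
  · -- entry ((3, 0), (1, 2))
    linear_combination ((-1) * T ^ 6 * W ^ 6 * Wi ^ 3 * ((W ^ 2 - Wi ^ 2) * R) + (-1) * T ^ 6 * W ^ 8 * Wi * ((W ^ 2 - Wi ^ 2) * R)) * hr2 + ((-1) * T ^ 5 * Ti * W ^ 6 * Wi ^ 5 * ((W ^ 2 - Wi ^ 2) * R) + (-1) * T ^ 5 * Ti * W ^ 8 * Wi ^ 3 * ((W ^ 2 - Wi ^ 2) * R) + T ^ 6 * W ^ 6 * Wi ^ 5 * ((W ^ 2 - Wi ^ 2) * R) + (-1) * T ^ 4 * W ^ 6 * Wi ^ 5 * ((W ^ 2 - Wi ^ 2) * R) + (2) * T ^ 6 * W ^ 8 * Wi ^ 3 * ((W ^ 2 - Wi ^ 2) * R) + (-1) * T ^ 4 * W ^ 8 * Wi ^ 3 * ((W ^ 2 - Wi ^ 2) * R) + T ^ 6 * W ^ 10 * Wi * ((W ^ 2 - Wi ^ 2) * R)) * htt + (T ^ 6 * W ^ 5 * Wi ^ 4 * ((W ^ 2 - Wi ^ 2) * R) + (-1) * T ^ 4 * W ^ 5 * Wi ^ 4 * ((W ^ 2 -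 Wi ^ 2) * R) + T ^ 6 * W ^ 4 * Wi ^ 3 * ((W ^ 2 - Wi ^ 2) * R) + (-1) * T ^ 4 * W ^ 4 * Wi ^ 3 * ((W ^ 2 - Wi ^ 2) * R) + (-1) * T ^ 8 * W ^ 7 * Wi ^ 2 * ((W ^ 2 - Wi ^ 2) * R) + (2) * T ^ 6 * W ^ 7 * Wi ^ 2 * ((W ^ 2 - Wi ^ 2) * R) + T ^ 6 * W ^ 3 * Wi ^ 2 * ((W ^ 2 - Wi ^ 2) * R) + (-1) * T ^ 4 * W ^ 7 * Wi ^ 2 * ((W ^ 2 - Wi ^ 2) * R) + (-1) * T ^ 4 * W ^ 3 * Wi ^ 2 * ((W ^ 2 - Wi ^ 2) * R) + (-1) * T ^ 8 * W ^ 6 * Wi * ((W ^ 2 - Wi ^ 2) * R) + (2) * T ^ 6 * W ^ 6 * Wi * ((W ^ 2 - Wi ^ 2) * R) + T ^ 6 * W ^ 2 * Wi * ((W ^ 2 - Wi ^ 2) * R) + (-1) * T ^ 4 * W ^ 6 * Wi * ((W ^ 2 - Wi ^ 2) * R) + (-1) * T ^ 4 * W ^ 2 * Wi * ((W ^ 2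 - Wi ^ 2) * R) + (-1) * T ^ 6 * W ^ 5 * ((W ^ 2 - Wi ^ 2) * R)) * hww
  · -- entry ((3, 0), (2, 1))
    linear_combination (T ^ 6 * W ^ 7 * Wi ^ 2 * ((W ^ 2 - Wi ^ 2) * R) + T ^ 6 * W ^ 9 * ((W ^ 2 - Wi ^ 2) * R)) * hr2 + (T ^ 5 * Ti * W ^ 7 * Wi ^ 4 * ((W ^ 2 - Wi ^ 2) * R) + T ^ 5 * Ti * W ^ 9 * Wi ^ 2 * ((W ^ 2 - Wi ^ 2) * R) + (-1) * T ^ 6 * W ^ 7 * Wi ^ 4 * ((W ^ 2 - Wi ^ 2) * R) + T ^ 4 * W ^ 7 * Wi ^ 4 * ((W ^ 2 - Wi ^ 2) * R) + (-2) * T ^ 6 * W ^ 9 * Wi ^ 2 * ((W ^ 2 - Wi ^ 2) * R) + T ^ 4 * W ^ 9 * Wi ^ 2 * ((W ^ 2 - Wi ^ 2) * R) + (-1) * T ^ 6 * W ^ 11 * ((W ^ 2 - Wi ^ 2) * R)) * htt + ((-1) * T ^ 6 * W ^ 6 * Wi ^ 3 * ((W ^ 2 - Wi ^ 2) * R) +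 T ^ 4 * W ^ 6 * Wi ^ 3 * ((W ^ 2 - Wi ^ 2) * R) + (-1) * T ^ 6 * W ^ 5 * Wi ^ 2 * ((W ^ 2 - Wi ^ 2) * R) + T ^ 4 * W ^ 5 * Wi ^ 2 * ((W ^ 2 - Wi ^ 2) * R) + T ^ 8 * W ^ 8 * Wi * ((W ^ 2 - Wi ^ 2) * R) + (-2) * T ^ 6 * W ^ 8 * Wi * ((W ^ 2 - Wi ^ 2) * R) + (-1) * T ^ 6 * W ^ 4 * Wi * ((W ^ 2 - Wi ^ 2) * R) + T ^ 4 * W ^ 8 * Wi * ((W ^ 2 - Wi ^ 2) * R) + T ^ 4 * W ^ 4 * Wi * ((W ^ 2 - Wi ^ 2) * R) + T ^ 8 * W ^ 7 * ((W ^ 2 - Wi ^ 2) * R) + (-2) * T ^ 6 * W ^ 7 * ((W ^ 2 - Wi ^ 2) * R) + (-2) * T ^ 6 * W ^ 3 * ((W ^ 2 - Wi ^ 2) * R) + T ^ 4 * W ^ 7 * ((W ^ 2 - Wi ^ 2) * R) + T ^ 4 * W ^ 3 * ((W ^ 2 - Wi ^ 2) * R)) * hww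
  · -- entry ((3, 0), (3, 0))
    linear_combination (T ^ 8 * W ^ 8 * Wi ^ 2 + (-2) * T ^ 6 * W ^ 8 * Wi ^ 2 + (-1) * T ^ 6 * W ^ 4 * Wi ^ 2 + T ^ 4 * W ^ 4 * Wi ^ 2 + (2) * T ^ 6 * W ^ 7 * Wi + T ^ 8 * W ^ 10 + (-1) * T ^ 6 * W ^ 10 + (-2) * T ^ 6 * W ^ 6 + T ^ 4 * W ^ 6) * hr2 + (T ^ 7 * Ti * W ^ 8 * Wi ^ 4 + (-2) * T ^ 5 * Ti * W ^ 8 * Wi ^ 4 + (-1) * T ^ 5 * Ti * W ^ 4 * Wi ^ 4 + T ^ 3 * Ti * W ^ 4 * Wi ^ 4 + (2) * T ^ 5 * Ti * W ^ 7 * Wi ^ 3 + T ^ 7 * Ti * W ^ 10 * Wi ^ 2 + (-1) * T ^ 5 * Ti * W ^ 10 * Wi ^ 2 + (-2) * T ^ 5 * Ti * W ^ 6 * Wi ^ 2 + T ^ 3 * Ti * W ^ 6 * Wi ^ 2 + (-1) * T ^ 8 * W ^ 8 * Wi ^ 4 + (3) * T ^ 6 * W ^ 8 * Wi ^ 4 +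 T ^ 6 * W ^ 4 * Wi ^ 4 + (-2) * T ^ 4 * W ^ 8 * Wi ^ 4 + (-2) * T ^ 4 * W ^ 4 * Wi ^ 4 + T ^ 2 * W ^ 4 * Wi ^ 4 + (-2) * T ^ 6 * W ^ 7 * Wi ^ 3 + (2) * T ^ 4 * W ^ 7 * Wi ^ 3 + (-2) * T ^ 8 * W ^ 10 * Wi ^ 2 + (4) * T ^ 6 * W ^ 10 * Wi ^ 2 + (3) * T ^ 6 * W ^ 6 * Wi ^ 2 + (-1) * T ^ 4 * W ^ 10 * Wi ^ 2 + (-4) * T ^ 4 * W ^ 6 * Wi ^ 2 + T ^ 2 * W ^ 6 * Wi ^ 2 + (-2) * T ^ 6 * W ^ 9 * Wi + (-1) * T ^ 8 * W ^ 12 + T ^ 6 * W ^ 12 + (2) * T ^ 6 * W ^ 8 + (-1) * T ^ 4 * W ^ 8) * htt + ((-1) * T ^ 8 * W ^ 7 * Wi ^ 3 + (3) * T ^ 6 * W ^ 7 * Wi ^ 3 + T ^ 6 * W ^ 3 * Wi ^ 3 + (-2) * T ^ 4 * W ^ 7 * Wi ^ 3 + (-2) * T ^ 4 * W ^ 3 *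 Wi ^ 3 + T ^ 2 * W ^ 3 * Wi ^ 3 + (-1) * T ^ 8 * W ^ 6 * Wi ^ 2 + T ^ 6 * W ^ 6 * Wi ^ 2 + T ^ 6 * W ^ 2 * Wi ^ 2 + (-2) * T ^ 4 * W ^ 2 * Wi ^ 2 + T ^ 2 * W ^ 2 * Wi ^ 2 + T ^ 10 * W ^ 9 * Wi + (-4) * T ^ 8 * W ^ 9 * Wi + (-2) * T ^ 8 * W ^ 5 * Wi + (4) * T ^ 6 * W ^ 9 * Wi + (5) * T ^ 6 * W ^ 5 * Wi + T ^ 6 * W * Wi + (-1) * T ^ 4 * W ^ 9 * Wi + (-4) * T ^ 4 * W ^ 5 * Wi + (-2) * T ^ 4 * W * Wi + T ^ 2 * W ^ 5 * Wi + T ^ 2 * W * Wi + T ^ 10 * W ^ 8 + (-2) * T ^ 8 * W ^ 8 + (-2) * T ^ 8 * W ^ 4 + (2) * T ^ 6 * W ^ 8 + (5) * T ^ 6 * W ^ 4 + T ^ 6 + (-1) * T ^ 4 * W ^ 8 + (-4) * T ^ 4 * W ^ 4 + (-2) * T ^ 4 + T ^ 2 * W ^ 4 + T ^ 2) * hww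

/-- `Ř²` satisfies `(Ř − 1)(Ř + t²·1)(Ř − t⁴q²·1) = 0`, reflecting its decomposition
into three orthogonal projectors with eigenvalues `1`, `−t²`, `t⁴q²`. -/
theorem RQ2_minimal_polynomial {A : Type*} [CommRing A] (q t w r : Aˣ)
    (hw2 : (w : A) ^ 2 = q)
    (hr2 : ((q : A) - (q⁻¹ : Aˣ)) ^ 2 * (r : A) ^ 2 =
      ((t : A) - (t⁻¹ : Aˣ)) * ((t : A) * q - ((t⁻¹ : Aˣ) : A) * ((q⁻¹ : Aˣ) : A))) :
    (RQ2 (q : A) ((q⁻¹ : Aˣ) : A) (t : A) (w : A) ((w⁻¹ : Aˣ) : A) (r : A) - 1) *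
      (RQ2 (q : A) ((q⁻¹ : Aˣ) : A) (t : A) (w : A) ((w⁻¹ : Aˣ) : A) (r : A) +
        ((t : A) ^ 2) • (1 : Matrix (Fin 4 × Fin 4) (Fin 4 × Fin 4) A)) *
      (RQ2 (q : A) ((q⁻¹ : Aˣ) : A) (t : A) (w : A) ((w⁻¹ : Aˣ) : A) (r : A) -
        ((t : A) ^ 4 * (q : A) ^ 2) • (1 : Matrix (Fin 4 × Fin 4) (Fin 4 × Fin 4) A)) = 0 := by
  have hq : (q : A) = (w : A) ^ 2 := hw2.symm
  have hqu : q = w ^ 2 := Units.ext (by exact_mod_cast hw2.symm)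
  have hqi : ((q⁻¹ : Aˣ) : A) = ((w⁻¹ : Aˣ) : A) ^ 2 := by
    rw [hqu, ← Units.val_pow_eq_pow_val, ← inv_pow]
  have htt : (t : A) * ((t⁻¹ : Aˣ) : A) = 1 := Units.mul_inv t
  have hww : (w : A) * ((w⁻¹ : Aˣ) : A) = 1 := Units.mul_inv w
  rw [hq, hqi] at hr2 ⊢
  rw [RQ2_mid_eq]
  exact RQ2_mid_mul _ _ _ _ _ htt hww hr2
end
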